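/- (Whiteley) Let a, b ≥ d+1 with a + b < (d+2 choose 2), and let p be a generic configuration of the complete bipartite graph K_{a,b} in ℝ^d, with bipartite classes X (|X| = a) and Y (|Y| = b). Then every infinitesimal motion p' of the framework (K_{a,b}, p) is the sum of a trivial motion and a quadric flex: there exist a skew-symmetric d×d real matrix S, a vector b₀ ∈ ℝ^d, a symmetric d×d real matrix A, c ∈ ℝ^d, and D ∈ ℝ such that every point p v lies on the quadric ((p v)ᵀ A (p v) + 2⟨c, p v⟩ + D = 0 for all vertices v), p' v = S (p v) + b₀ + (A (p v) + c) for all v ∈ X, and p' v = S (p v) + b₀ − (A (p v) + c) for all v ∈ Y. -/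

import Mathlib

open scoped Classical

noncomputable section

/-- Two configurations are equivalent if corresponding edge lengths agree. -/
def Equivalent {d : ℕ} {V : Type*} (G : SimpleGraph V)
    (p q : V → EuclideanSpace ℝ (Fin d)) : Prop :=
  ∀ u v, G.Adj u v → ‖p u - p v‖ = ‖q u - q v‖

/-- Two configurations are congruent if all pairwise distances agree. -/
def ConfigCongruent {d : ℕ} {V : Type*} (p q : V → EuclideanSpace ℝ (Fin d)) : Prop :=
  ∀ u v, ‖p u - p v‖ = ‖q u - q v‖

/-- A configuration is generic if the coordinates of its points are
algebraically independent over `ℚ`. -/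
def Generic {d : ℕ} {V : Type*} (p : V → EuclideanSpace ℝ (Fin d)) : Prop :=
  AlgebraicIndependent ℚ (fun x : V × Fin d => p x.1 x.2)

/-- A framework `(G, p)` is locally rigid if all equivalent configurations
sufficiently close to `p` are congruent to `p`. -/
def LocallyRigid {d : ℕ} {V : Type*} (G : SimpleGraph V)
    (p : V → EuclideanSpace ℝ (Fin d)) : Prop :=
  ∃ ε > 0, ∀ q, Equivalent G p q → (∀ v, ‖q v - p v‖ < ε) → ConfigCongruent p q

/-- Generic local rigidity in `ℝ^d`. -/
def GLR (d : ℕ) {V : Type*} (G : SimpleGraph V) : Prop :=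
  ∀ p : V → EuclideanSpace ℝ (Fin d), Generic p → LocallyRigid G p

/-- Generic global rigidity in `ℝ^d`. -/
def GGR (d : ℕ) {V : Type*} (G : SimpleGraph V) : Prop :=
  ∀ p : V → EuclideanSpace ℝ (Fin d), Generic p →
    ∀ q, Equivalent G p q → ConfigCongruent p q

/-- Generic redundant rigidity in `ℝ^d`: deleting any edge leaves a GLR graph. -/
def GRR (d : ℕ) {V : Type*} (G : SimpleGraph V) : Prop :=
  ∀ e ∈ G.edgeSet, GLR d (G.deleteEdges {e})

/-- `G` is `k`-connected: at least `k+1` vertices, and removing any at most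
`k-1` vertices leaves a connected induced subgraph. -/
def KConnected (k : ℕ) {V : Type*} [Fintype V] (G : SimpleGraph V) : Prop :=
  k + 1 ≤ Fintype.card V ∧
    ∀ S : Finset V, S.card ≤ k - 1 → (G.induce ((↑S : Set V)ᶜ)).Connected

/-- The join `G + H` of two graphs: all edges of `G`, all edges of `H`, and
all cross edges. -/
def graphJoin {α β : Type*} (G : SimpleGraph α) (H : SimpleGraph β) :
    SimpleGraph (α ⊕ β) :=
  SimpleGraph.fromRel (fun x y =>
    (∃ a b, x = Sum.inl a ∧ y = Sum.inl b ∧ G.Adj a b) ∨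
    (∃ a b, x = Sum.inr a ∧ y = Sum.inr b ∧ H.Adj a b) ∨
    (x.isLeft ∧ y.isRight))

/-- The disjoint union `G ∪ H` of two graphs. -/
def disjUnion {α β : Type*} (G : SimpleGraph α) (H : SimpleGraph β) :
    SimpleGraph (α ⊕ β) :=
  SimpleGraph.fromRel (fun x y =>
    (∃ a b, x = Sum.inl a ∧ y = Sum.inl b ∧ G.Adj a b) ∨
    (∃ a b, x = Sum.inr a ∧ y = Sum.inr b ∧ H.Adj a b))

/-- Apply a `d × d` matrix to a point of `ℝ^d`. -/
def matApply {d : ℕ} (A : Matrix (Fin d) (Fin d) ℝ)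
    (x : EuclideanSpace ℝ (Fin d)) : EuclideanSpace ℝ (Fin d) :=
  WithLp.toLp 2 (fun i => ∑ j, A i j * x j)

/-- An infinitesimal motion of a framework. -/
def IsInfinitesimalMotion {d : ℕ} {V : Type*} (G : SimpleGraph V)
    (p p' : V → EuclideanSpace ℝ (Fin d)) : Prop :=
  ∀ u v, G.Adj u v → inner ℝ (p u - p v) (p' u - p' v) = (0 : ℝ)

/-- A trivial motion: `p' v = S (p v) + b` for a skew-symmetric matrix `S`. -/
def IsTrivialMotion {d : ℕ} {V : Type*}
    (p p' : V → EuclideanSpace ℝ (Fin d)) : Prop :=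
  ∃ (S : Matrix (Fin d) (Fin d) ℝ) (b : EuclideanSpace ℝ (Fin d)),
    S.transpose = -S ∧ ∀ v, p' v = matApply S (p v) + b

/-- A framework is infinitesimally rigid if every infinitesimal motion is trivial. -/
def InfinitesimallyRigid {d : ℕ} {V : Type*} (G : SimpleGraph V)
    (p : V → EuclideanSpace ℝ (Fin d)) : Prop :=
  ∀ p', IsInfinitesimalMotion G p p' → IsTrivialMotion p p'

/-- An equilibrium stress: a real number on each edge (zero off edges) with the
equilibrium condition at each vertex. -/
def IsEquilibriumStress {d : ℕ} {V : Type*} [Fintype V] (G : SimpleGraph V)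
    (p : V → EuclideanSpace ℝ (Fin d)) (ω : Sym2 V → ℝ) : Prop :=
  (∀ e, e ∉ G.edgeSet → ω e = 0) ∧
  ∀ v, ∑ u ∈ G.neighborFinset v, ω s(u, v) • (p v - p u) = 0

/-- The point `x` lies on the quadric `(A, c, D)`:
`xᵀ A x + 2⟨c, x⟩ + D = 0`. -/
def OnQuadric {d : ℕ} (A : Matrix (Fin d) (Fin d) ℝ) (c : EuclideanSpace ℝ (Fin d))
    (D : ℝ) (x : EuclideanSpace ℝ (Fin d)) : Prop :=
  (∑ i, ∑ j, x i * A i j * x j) + 2 * (∑ i, c i * x i) + D = 0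

/-- The polarized quadric constraint for a pair of points:
`xᵀ A y + ⟨c, x + y⟩ + D = 0`. -/
def PolarConstraint {d : ℕ} (A : Matrix (Fin d) (Fin d) ℝ)
    (c : EuclideanSpace ℝ (Fin d)) (D : ℝ) (x y : EuclideanSpace ℝ (Fin d)) : Prop :=
  (∑ i, ∑ j, x i * A i j * y j) + (∑ i, c i * (x i + y i)) + D = 0

/-! Write `ĥ(q) = (q, 1)` for the homogeneous coordinates of a point and `α(q, q') = (-q', ⟨q, q'⟩)`.
The edge condition of `K_{a,b}` at `x ∈ X`, `y ∈ Y` reads `ĥ(y) ⬝ α(x) + ĥ(x) ⬝ α(y) = 0`. For a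
generic configuration the `ĥ` of `d + 1` points of either class form a basis of `ℝ^{d+1}`, and this
bilinear relation then forces `α(x) = ĥ(x) N` and `α(y) = -N ĥ(y)` for a single
`(d+1) × (d+1)` matrix `N`. Splitting the upper-left block of `N` into its skew and symmetric parts
`S`, `-A` and reading off the last row and column gives the trivial motion `(S, b₀)` and the
quadric flex `(A, c, D)`; the last coordinate of `α` is the statement that every point lies on
the quadric. -/

open Matrix

theorem exists_vecMul_eq_and_mulVec_eq_neg {K n ι κ : Type*} [Field K] [Fintype n]
    [DecidableEq n] (h : ι → n → K) (g : κ → n → K) (α : ι → n → K) (β : κ → n → K)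
    (e : n → ι) (f : n → κ) (he : (of fun k => h (e k)).det ≠ 0)
    (hf : (of fun k => g (f k)).det ≠ 0) (rel : ∀ x y, g y ⬝ᵥ α x + h x ⬝ᵥ β y = 0) :
    ∃ N : Matrix n n K, (∀ x, α x = h x ᵥ* N) ∧ ∀ y, β y = -(N *ᵥ g y) := by
  set N := (of fun k => h (e k))⁻¹ * of fun k => α (e k)
  have hN : ∀ k, h (e k) ᵥ* N = α (e k) := fun k =>
    congrFun (mul_nonsing_inv_cancel_left _ _ (isUnit_iff_ne_zero.mpr he)) k
  have hβ : ∀ y, β y = -(N *ᵥ g y) := fun y => by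
    refine eq_neg_of_add_eq_zero_left (eq_zero_of_mulVec_eq_zero he (funext fun k => ?_))
    simp only [mulVec, of_apply, Pi.zero_apply, dotProduct_add, dotProduct_mulVec, hN]
    rw [add_comm, dotProduct_comm]
    exact rel _ y
  refine ⟨N, fun x => sub_eq_zero.mp (eq_zero_of_mulVec_eq_zero hf (funext fun k => ?_)), hβ⟩
  simp only [mulVec, of_apply, Pi.zero_apply, dotProduct_sub]
  rw [dotProduct_comm _ (h x ᵥ* N), ← dotProduct_mulVec, ← neg_neg (N *ᵥ g (f k)), ← hβ,
    dotProduct_neg, sub_neg_eq_add]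
  exact rel x _

section

variable {d : ℕ}

theorem ofLp_dotProduct_ofLp (x y : EuclideanSpace ℝ (Fin d)) :
    x.ofLp ⬝ᵥ y.ofLp = inner ℝ x y := by
  simp [EuclideanSpace.inner_eq_star_dotProduct, dotProduct_comm]

theorem ofLp_matApply (A : Matrix (Fin d) (Fin d) ℝ) (x : EuclideanSpace ℝ (Fin d)) :
    (matApply A x).ofLp = A *ᵥ x.ofLp :=
  rfl

theorem matApply_neg (A : Matrix (Fin d) (Fin d) ℝ) (x : EuclideanSpace ℝ (Fin d)) :
    matApply (-A) x = -matApply A x :=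
  WithLp.ofLp_injective 2 (neg_mulVec x.ofLp A)

theorem inner_matApply_transpose (A : Matrix (Fin d) (Fin d) ℝ) (x y : EuclideanSpace ℝ (Fin d)) :
    inner ℝ (matApply Aᵀ x) y = inner ℝ x (matApply A y) := by
  rw [← ofLp_dotProduct_ofLp, ← ofLp_dotProduct_ofLp, ofLp_matApply, ofLp_matApply,
    mulVec_transpose, dotProduct_mulVec]

theorem inner_matApply_self_of_transpose_eq_neg {S : Matrix (Fin d) (Fin d) ℝ} (hS : Sᵀ = -S)
    (x : EuclideanSpace ℝ (Fin d)) : inner ℝ x (matApply S x) = 0 := by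
  have h := inner_matApply_transpose S x x
  rw [hS, matApply_neg, inner_neg_left, real_inner_comm] at h
  linarith

theorem onQuadric_iff_inner {A : Matrix (Fin d) (Fin d) ℝ} {c x : EuclideanSpace ℝ (Fin d)}
    {D : ℝ} : OnQuadric A c D x ↔ inner ℝ x (matApply A x) + 2 * inner ℝ c x + D = 0 := by
  simp [OnQuadric, ← ofLp_dotProduct_ofLp, ofLp_matApply, mulVec, dotProduct, Finset.mul_sum,
    mul_assoc]

def homogCoords (q : EuclideanSpace ℝ (Fin d)) : Fin d ⊕ Unit → ℝ :=
  Sum.elim q.ofLp 1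

def momentCoords (q q' : EuclideanSpace ℝ (Fin d)) : Fin d ⊕ Unit → ℝ :=
  Sum.elim (-q'.ofLp) fun _ => inner ℝ q q'

theorem homogCoords_dotProduct_momentCoords_add (x x' y y' : EuclideanSpace ℝ (Fin d)) :
    homogCoords y ⬝ᵥ momentCoords x x' + homogCoords x ⬝ᵥ momentCoords y y' =
      inner ℝ (x - y) (x' - y') := by
  simp only [homogCoords, momentCoords, sumElim_dotProduct_sumElim, dotProduct_neg,
    ofLp_dotProduct_ofLp, inner_sub_left, inner_sub_right]
  simp [real_inner_comm]
  ring

theorem momentCoords_eq_sumElim_iff {x x' u : EuclideanSpace ℝ (Fin d)} {r : ℝ} :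
    momentCoords x x' = Sum.elim (-u.ofLp) (fun _ => r) ↔ x' = u ∧ inner ℝ x x' = r := by
  rw [momentCoords, Sum.elim_eq_iff, neg_inj, (WithLp.ofLp_injective 2).eq_iff, funext_iff]
  simp only [forall_const]

theorem Generic.det_homogCoords_ne_zero {V : Type*} {p : V → EuclideanSpace ℝ (Fin d)}
    (hp : Generic p) (f : Fin d ⊕ Unit ↪ V) : (of fun k => homogCoords (p (f k))).det ≠ 0 := by
  let P : Matrix (Fin d ⊕ Unit) (Fin d ⊕ Unit) (MvPolynomial (V × Fin d) ℚ) :=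
    of fun k => Sum.elim (fun i => MvPolynomial.X (f k, i)) 1
  have hP : (MvPolynomial.aeval fun v : V × Fin d => p v.1 v.2).mapMatrix P =
      of fun k => homogCoords (p (f k)) := by
    ext k (i | u) <;> simp [P, homogCoords]
  -- put the `i`-th chosen vertex at the `i`-th unit vector and the last one at the origin
  let z : V × Fin d → ℚ := fun v => if v.1 = f (.inl v.2) then 1 else 0
  have hz : (MvPolynomial.eval z).mapMatrix P = fromBlocks 1 (of fun _ _ => 1) 0 1 := by
    ext (i | u) (j | w) <;> simp [P, z, one_apply, f.injective.eq_iff, eq_comm]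
  have hPdet : P.det ≠ 0 := fun h => by
    have := congrArg (MvPolynomial.eval z) h
    rw [RingHom.map_det, hz, det_fromBlocks_zero₂₁] at this
    simp at this
  rw [← hP, ← AlgHom.map_det]
  exact fun h => hPdet (hp.eq_zero_of_aeval_eq_zero _ h)

def flexMatrix (S A : Matrix (Fin d) (Fin d) ℝ) (b c : EuclideanSpace ℝ (Fin d)) (D : ℝ) :
    Matrix (Fin d ⊕ Unit) (Fin d ⊕ Unit) ℝ :=
  fromBlocks (S - A) (of fun i _ => (b - c) i) (of fun _ j => -(b + c) j) (of fun _ _ => -D)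

theorem exists_eq_flexMatrix (N : Matrix (Fin d ⊕ Unit) (Fin d ⊕ Unit) ℝ) :
    ∃ S A b c D, Sᵀ = -S ∧ A.IsSymm ∧ N = flexMatrix S A b c D := by
  set P := N.toBlocks₁₁
  set u : Fin d → ℝ := fun i => N (.inl i) (.inr ())
  set v : Fin d → ℝ := fun i => N (.inr ()) (.inl i)
  refine ⟨(2⁻¹ : ℝ) • (P - Pᵀ), -(2⁻¹ : ℝ) • (P + Pᵀ), WithLp.toLp 2 ((2⁻¹ : ℝ) • (u - v)),
    WithLp.toLp 2 (-(2⁻¹ : ℝ) • (u + v)), -N (.inr ()) (.inr ()), ?_, ?_, ?_⟩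
  · ext i j; simp; ring
  · ext i j; simp; ring
  · ext (i | ⟨⟩) (j | ⟨⟩) <;> simp [flexMatrix, P, u, v, toBlocks₁₁] <;> ring

variable {S A : Matrix (Fin d) (Fin d) ℝ} {b c : EuclideanSpace ℝ (Fin d)} {D : ℝ}

theorem homogCoords_vecMul_flexMatrix (hS : Sᵀ = -S) (hA : A.IsSymm)
    (x : EuclideanSpace ℝ (Fin d)) :
    homogCoords x ᵥ* flexMatrix S A b c D =
      Sum.elim (-(matApply S x + b + (matApply A x + c)).ofLp) fun _ =>
        inner ℝ (b - c) x - D := by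
  rw [homogCoords, flexMatrix, vecMul_fromBlocks, ← mulVec_transpose, transpose_sub, hS, hA.eq]
  ext (i | u)
  · simp [vecMul, dotProduct, sub_mulVec, neg_mulVec, ofLp_matApply]
    ring
  · simp [vecMul, dotProduct, ← ofLp_dotProduct_ofLp, mul_comm]
    ring

theorem neg_flexMatrix_mulVec_homogCoords (x : EuclideanSpace ℝ (Fin d)) :
    -(flexMatrix S A b c D *ᵥ homogCoords x) =
      Sum.elim (-(matApply S x + b - (matApply A x + c)).ofLp) fun _ =>
        inner ℝ (b + c) x + D := by
  rw [homogCoords, flexMatrix, fromBlocks_mulVec]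
  ext (i | u)
  · simp [mulVec, dotProduct, ofLp_matApply, sub_mul]
    ring
  · simp [mulVec, dotProduct, ← ofLp_dotProduct_ofLp, add_mul, Finset.sum_add_distrib]
    ring

theorem eq_and_onQuadric_of_momentCoords_eq_vecMul (hS : Sᵀ = -S) (hA : A.IsSymm)
    {x x' : EuclideanSpace ℝ (Fin d)}
    (h : momentCoords x x' = homogCoords x ᵥ* flexMatrix S A b c D) :
    x' = matApply S x + b + (matApply A x + c) ∧ OnQuadric A c D x := by
  rw [homogCoords_vecMul_flexMatrix hS hA, momentCoords_eq_sumElim_iff] at h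
  obtain ⟨rfl, h⟩ := h
  refine ⟨rfl, onQuadric_iff_inner.2 ?_⟩
  simp only [inner_add_right, inner_sub_right, inner_matApply_self_of_transpose_eq_neg hS,
    real_inner_comm x] at h
  linarith [real_inner_comm x c]

theorem eq_and_onQuadric_of_momentCoords_eq_neg_mulVec (hS : Sᵀ = -S)
    {x x' : EuclideanSpace ℝ (Fin d)}
    (h : momentCoords x x' = -(flexMatrix S A b c D *ᵥ homogCoords x)) :
    x' = matApply S x + b - (matApply A x + c) ∧ OnQuadric A c D x := by
  rw [neg_flexMatrix_mulVec_homogCoords, momentCoords_eq_sumElim_iff] at h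
  obtain ⟨rfl, h⟩ := h
  refine ⟨rfl, onQuadric_iff_inner.2 ?_⟩
  simp only [inner_add_right, inner_sub_right, inner_matApply_self_of_transpose_eq_neg hS,
    real_inner_comm x] at h
  linarith [real_inner_comm x c]

end

theorem whiteley_flexes_general (d a b : ℕ) (ha : d + 1 ≤ a) (hb : d + 1 ≤ b)
    (p : Fin a ⊕ Fin b → EuclideanSpace ℝ (Fin d)) (hp : Generic p)
    (p' : Fin a ⊕ Fin b → EuclideanSpace ℝ (Fin d))
    (hm : IsInfinitesimalMotion (completeBipartiteGraph (Fin a) (Fin b)) p p') :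
    ∃ (S : Matrix (Fin d) (Fin d) ℝ) (b₀ : EuclideanSpace ℝ (Fin d))
      (A : Matrix (Fin d) (Fin d) ℝ) (c : EuclideanSpace ℝ (Fin d)) (D : ℝ),
      S.transpose = -S ∧ A.IsSymm ∧
      (∀ v, OnQuadric A c D (p v)) ∧
      (∀ x : Fin a, p' (Sum.inl x) =
        matApply S (p (Sum.inl x)) + b₀ + (matApply A (p (Sum.inl x)) + c)) ∧
      (∀ y : Fin b, p' (Sum.inr y) =
        matApply S (p (Sum.inr y)) + b₀ - (matApply A (p (Sum.inr y)) + c)) := by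
  obtain ⟨e⟩ := Function.Embedding.nonempty_of_card_le (α := Fin d ⊕ Unit) (β := Fin a)
    (by simpa using ha)
  obtain ⟨f⟩ := Function.Embedding.nonempty_of_card_le (α := Fin d ⊕ Unit) (β := Fin b)
    (by simpa using hb)
  obtain ⟨N, hX, hY⟩ := exists_vecMul_eq_and_mulVec_eq_neg
    (fun x => homogCoords (p (.inl x))) (fun y => homogCoords (p (.inr y)))
    (fun x => momentCoords (p (.inl x)) (p' (.inl x)))
    (fun y => momentCoords (p (.inr y)) (p' (.inr y))) e f
    (hp.det_homogCoords_ne_zero (e.trans .inl)) (hp.det_homogCoords_ne_zero (f.trans .inr))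
    fun x y => (homogCoords_dotProduct_momentCoords_add ..).trans (hm _ _ (by simp))
  obtain ⟨S, A, b₀, c, D, hS, hA, rfl⟩ := exists_eq_flexMatrix N
  have hX' := fun x => eq_and_onQuadric_of_momentCoords_eq_vecMul hS hA (hX x)
  have hY' := fun y => eq_and_onQuadric_of_momentCoords_eq_neg_mulVec hS (hY y)
  exact ⟨S, b₀, A, c, D, hS, hA, Sum.rec (fun x => (hX' x).2) (fun y => (hY' y).2),
    fun x => (hX' x).1, fun y => (hY' y).1⟩

/-- Theorem (Whiteley): for `a, b ≥ d+1` with `a + b < C(d+2, 2)`, every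
infinitesimal motion of a generic framework of `K_{a,b}` in `ℝ^d` is the sum
of a trivial motion and a quadric flex. -/
theorem whiteley_flexes (d a b : ℕ) (ha : d + 1 ≤ a) (hb : d + 1 ≤ b)
    (hab : a + b < (d + 2).choose 2)
    (p : Fin a ⊕ Fin b → EuclideanSpace ℝ (Fin d)) (hp : Generic p)
    (p' : Fin a ⊕ Fin b → EuclideanSpace ℝ (Fin d))
    (hm : IsInfinitesimalMotion (completeBipartiteGraph (Fin a) (Fin b)) p p') :
    ∃ (S : Matrix (Fin d) (Fin d) ℝ) (b₀ : EuclideanSpace ℝ (Fin d))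
      (A : Matrix (Fin d) (Fin d) ℝ) (c : EuclideanSpace ℝ (Fin d)) (D : ℝ),
      S.transpose = -S ∧ A.IsSymm ∧
      (∀ v, OnQuadric A c D (p v)) ∧
      (∀ x : Fin a, p' (Sum.inl x) =
        matApply S (p (Sum.inl x)) + b₀ + (matApply A (p (Sum.inl x)) + c)) ∧
      (∀ y : Fin b, p' (Sum.inr y) =
        matApply S (p (Sum.inr y)) + b₀ - (matApply A (p (Sum.inr y)) + c)) :=
  whiteley_flexes_general d a b ha hb p hp p' hm

end
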